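/- arXiv:2410.19751 — 5 statements merged into one kernel-verified Lean document; each statement's English description precedes it below -/
import Mathlib

section
/- For 0 < β₊ < 1, λ₊ > 0, α₊ > 0, and any real ξ, the integral ∫₀^∞ (e^{iyξ} - 1) α₊ e^{-λ₊ y} y^{-(1+β₊)} dy equals α₊ Γ(-β₊) ((λ₊ - iξ)^{β₊} - λ₊^{β₊}), where (λ₊ - iξ)^{β₊} is taken with the principal branch. -/
open MeasureTheory Real Set Complex Filter
set_option maxHeartbeats 1000000

-- real integrability: t^s * exp(-b t) on Ioi 0
lemma intOn_rpow_exp {s b : ℝ} (hs : -1 < s) (hb : 0 < b) :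
    IntegrableOn (fun t : ℝ => t ^ s * Real.exp (-b * t)) (Ioi 0) := by
  have := integrableOn_rpow_mul_exp_neg_mul_rpow hs one_pos hb
  simpa [Real.rpow_one] using this

-- norm of exp(-z*t)
lemma norm_exp_neg_mul (z : ℂ) (t : ℝ) :
    ‖Complex.exp (-z * t)‖ = Real.exp (-z.re * t) := by
  rw [Complex.norm_exp]
  norm_num [Complex.mul_re]

-- ‖exp w - 1‖ ≤ ‖w‖ * exp ‖w‖
lemma norm_exp_sub_one_le' (w : ℂ) : ‖Complex.exp w - 1‖ ≤ ‖w‖ * Real.exp ‖w‖ := by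
  have h := (convex_closedBall (0:ℂ) ‖w‖).norm_image_sub_le_of_norm_hasDerivWithin_le
    (f := Complex.exp) (f' := Complex.exp) (C := Real.exp ‖w‖)
    (fun x _ => (Complex.hasDerivAt_exp x).hasDerivWithinAt)
    (fun x hx => by
      rw [Complex.norm_exp]
      refine Real.exp_le_exp.2 ((le_abs_self x.re).trans ((Complex.abs_re_le_norm x).trans ?_))
      simpa using mem_closedBall_zero_iff.1 hx)
    (Metric.mem_closedBall_self (norm_nonneg w)) (mem_closedBall_zero_iff.2 le_rfl)
  simpa [Complex.exp_zero, mul_comm] using h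

-- integrability of t^s * exp(-z t) for complex z, re z > 0
lemma intOn_rpow_cexp {s : ℝ} (hs : -1 < s) {z : ℂ} (hz : 0 < z.re) :
    IntegrableOn (fun t : ℝ => ((t ^ s : ℝ) : ℂ) * Complex.exp (-z * t)) (Ioi 0) := by
  have hmeas : AEStronglyMeasurable (fun t : ℝ => ((t ^ s : ℝ) : ℂ) * Complex.exp (-z * t))
      (volume.restrict (Ioi 0)) := by
    apply ContinuousOn.aestronglyMeasurable _ measurableSet_Ioi
    refine ContinuousOn.mul ?_ (Continuous.continuousOn (by continuity))
    exact continuous_ofReal.comp_continuousOn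
      (fun t ht => (Real.continuousAt_rpow_const t s (Or.inl (ne_of_gt ht))).continuousWithinAt)
  refine (intOn_rpow_exp hs hz).mono' hmeas ?_
  filter_upwards [ae_restrict_mem measurableSet_Ioi] with t ht
  rw [norm_mul, norm_exp_neg_mul, Complex.norm_real, Real.norm_eq_abs,
    _root_.abs_of_nonneg (Real.rpow_nonneg (le_of_lt ht) s)]

-- the Laplace transform of t^(-β), complex parameter
lemma laplace_rpow {β : ℝ} (hβ0 : 0 < β) (hβ1 : β < 1) {z : ℂ} (hz : 0 < z.re) :
    ∫ t in Ioi (0:ℝ), ((t ^ (-β) : ℝ) : ℂ) * Complex.exp (-z * t)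
      = (Real.Gamma (1 - β) : ℂ) * z ^ ((β : ℂ) - 1) := by
  set U : Set ℂ := {w : ℂ | 0 < w.re} with hU
  have hUopen : IsOpen U := isOpen_lt continuous_const Complex.continuous_re
  have hUconn : IsPreconnected U := (convex_halfSpace_re_gt 0).isPreconnected
  set f : ℂ → ℂ := fun w => ∫ t in Ioi (0:ℝ), ((t ^ (-β) : ℝ) : ℂ) * Complex.exp (-w * t) with hf
  set g : ℂ → ℂ := fun w => (Real.Gamma (1 - β) : ℂ) * w ^ ((β : ℂ) - 1) with hg
  have hβ' : (-1 : ℝ) < -β := by linarith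
  -- f is differentiable on U
  have hfd : DifferentiableOn ℂ f U := by
    intro z₀ hz₀
    have hre : 0 < z₀.re := hz₀
    set ε := z₀.re / 2 with hε
    have hεpos : 0 < ε := by positivity
    have hF_meas : ∀ᶠ w in nhds z₀, AEStronglyMeasurable
        (fun t : ℝ => ((t ^ (-β) : ℝ) : ℂ) * Complex.exp (-w * t)) (volume.restrict (Ioi 0)) := by
      filter_upwards with w
      apply ContinuousOn.aestronglyMeasurable _ measurableSet_Ioi
      refine ContinuousOn.mul ?_ (Continuous.continuousOn (by continuity))
      exact continuous_ofReal.comp_continuousOn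
        (fun t ht => (Real.continuousAt_rpow_const t (-β) (Or.inl (ne_of_gt ht))).continuousWithinAt)
    have hF_int : Integrable (fun t : ℝ => ((t ^ (-β) : ℝ) : ℂ) * Complex.exp (-z₀ * t))
        (volume.restrict (Ioi 0)) := intOn_rpow_cexp hβ' hre
    have hF'_meas : AEStronglyMeasurable
        (fun t : ℝ => ((t ^ (-β) : ℝ) : ℂ) * (-(t : ℂ) * Complex.exp (-z₀ * t)))
        (volume.restrict (Ioi 0)) := by
      apply ContinuousOn.aestronglyMeasurable _ measurableSet_Ioi
      refine ContinuousOn.mul ?_ (Continuous.continuousOn (by continuity))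
      exact continuous_ofReal.comp_continuousOn
        (fun t ht => (Real.continuousAt_rpow_const t (-β) (Or.inl (ne_of_gt ht))).continuousWithinAt)
    have h_bound : ∀ᵐ t ∂(volume.restrict (Ioi 0)), ∀ w ∈ Metric.ball z₀ ε,
        ‖((t ^ (-β) : ℝ) : ℂ) * (-(t : ℂ) * Complex.exp (-w * t))‖
          ≤ t ^ (1 - β) * Real.exp (-ε * t) := by
      filter_upwards [ae_restrict_mem measurableSet_Ioi] with t ht w hw
      have ht0 : (0:ℝ) < t := ht
      have hwre : ε ≤ w.re := by
        have h1 : |(w - z₀).re| ≤ ‖w - z₀‖ := Complex.abs_re_le_norm _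
        have h2 : ‖w - z₀‖ < ε := mem_ball_iff_norm.1 hw
        have := (abs_le.1 (h1.trans h2.le)).1
        simp only [Complex.sub_re] at this
        have : z₀.re - ε ≤ w.re := by linarith
        simpa [hε] using by linarith
      rw [norm_mul, norm_mul, norm_neg, norm_exp_neg_mul, Complex.norm_real,
        Complex.norm_real, Real.norm_eq_abs, Real.norm_eq_abs,
        _root_.abs_of_nonneg (Real.rpow_nonneg ht0.le _), _root_.abs_of_nonneg ht0.le]
      have hexp : Real.exp (-w.re * t) ≤ Real.exp (-ε * t) :=
        Real.exp_le_exp.2 (by nlinarith)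
      have h3 : t ^ (-β) * (t * Real.exp (-w.re * t)) ≤ t ^ (-β) * (t * Real.exp (-ε * t)) :=
        mul_le_mul_of_nonneg_left (mul_le_mul_of_nonneg_left hexp ht0.le)
          (Real.rpow_nonneg ht0.le _)
      calc t ^ (-β) * (t * Real.exp (-w.re * t)) ≤ t ^ (-β) * (t * Real.exp (-ε * t)) := h3
        _ = t ^ (1 - β) * Real.exp (-ε * t) := by
            rw [← mul_assoc, mul_comm (t ^ (-β)) t,
              ← Real.rpow_one_add' ht0.le (by intro h; nlinarith [hβ1] : (1:ℝ) + -β ≠ 0), sub_eq_add_neg]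
    have bound_int : Integrable (fun t : ℝ => t ^ (1 - β) * Real.exp (-ε * t))
        (volume.restrict (Ioi 0)) := intOn_rpow_exp (by linarith) hεpos
    have h_diff : ∀ᵐ t ∂(volume.restrict (Ioi 0)), ∀ w ∈ Metric.ball z₀ ε,
        HasDerivAt (fun w : ℂ => ((t ^ (-β) : ℝ) : ℂ) * Complex.exp (-w * t))
          (((t ^ (-β) : ℝ) : ℂ) * (-(t : ℂ) * Complex.exp (-w * t))) w := by
      filter_upwards with t w _
      have h1 : HasDerivAt (fun w : ℂ => -w * t) (-(t:ℂ)) w := by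
        simpa using ((hasDerivAt_id w).neg.mul_const (t:ℂ))
      have h2 : HasDerivAt (fun w : ℂ => Complex.exp (-w * t))
          (Complex.exp (-w * t) * -(t:ℂ)) w := (Complex.hasDerivAt_exp _).comp w h1
      simpa [mul_comm] using h2.const_mul ((t ^ (-β) : ℝ) : ℂ)
    have key := hasDerivAt_integral_of_dominated_loc_of_deriv_le (Metric.ball_mem_nhds z₀ hεpos)
      hF_meas hF_int hF'_meas h_bound bound_int h_diff
    exact (key.2.differentiableAt).differentiableWithinAt
  -- g is differentiable on U
  have hgd : DifferentiableOn ℂ g U := by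
    intro w hw
    have hw' : w ∈ Complex.slitPlane := Or.inl hw
    exact ((((hasDerivAt_id w).cpow_const hw').differentiableAt).const_mul _).differentiableWithinAt
  -- they agree on positive reals
  have hreal : ∀ r : ℝ, 0 < r → f (r : ℂ) = g (r : ℂ) := by
    intro r hr
    have h1 := Complex.integral_cpow_mul_exp_neg_mul_Ioi
      (a := (1 : ℂ) - (β : ℂ)) (r := r) (by simp [Complex.sub_re]; linarith) hr
    have h2 : ∀ t ∈ Ioi (0:ℝ), ((t ^ (-β) : ℝ) : ℂ) * Complex.exp (-(r:ℂ) * t)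
        = (t : ℂ) ^ ((1 : ℂ) - (β : ℂ) - 1) * Complex.exp (-((r : ℝ) * t)) := by
      intro t ht
      rw [Complex.ofReal_cpow (le_of_lt ht)]
      push_cast
      ring_nf
    rw [hf]
    simp only []
    have hcast : (1 : ℂ) - (β : ℂ) = ((1 - β : ℝ) : ℂ) := by push_cast; ring
    rw [MeasureTheory.setIntegral_congr_fun measurableSet_Ioi h2, h1, hg]
    have hrne : (r : ℂ) ≠ 0 := Complex.ofReal_ne_zero.2 (ne_of_gt hr)
    rw [hcast, Complex.Gamma_ofReal]
    push_cast
    rw [mul_comm]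
    congr 1
    rw [one_div, Complex.inv_cpow _ _ (by
      rw [Complex.arg_ofReal_of_nonneg hr.le]; exact Ne.symm Real.pi_ne_zero),
      ← Complex.cpow_neg]
    congr 1
    ring
  -- identity theorem
  have hfa : AnalyticOnNhd ℂ f U := hfd.analyticOnNhd hUopen
  have hga : AnalyticOnNhd ℂ g U := hgd.analyticOnNhd hUopen
  have h1U : (1 : ℂ) ∈ U := by simp [hU]
  have hfreq : ∃ᶠ w in nhdsWithin (1 : ℂ) {(1:ℂ)}ᶜ, f w = g w := by
    have hseq : Tendsto (fun n : ℕ => ((1 + (n+1:ℝ)⁻¹ : ℝ) : ℂ)) atTop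
        (nhdsWithin (1 : ℂ) {(1:ℂ)}ᶜ) := by
      apply tendsto_nhdsWithin_of_tendsto_nhds_of_eventually_within
      · have h0 : Tendsto (fun n : ℕ => ((n:ℝ)+1)⁻¹) atTop (nhds 0) := by
          simpa only [one_div] using (tendsto_one_div_add_atTop_nhds_zero_nat (𝕜 := ℝ))
        have h1 : Tendsto (fun n : ℕ => (1 + ((n:ℝ)+1)⁻¹)) atTop (nhds 1) := by
          have := (tendsto_const_nhds (x := (1:ℝ)) (f := atTop (α := ℕ))).add h0
          rwa [add_zero] at this
        exact (Complex.continuous_ofReal.tendsto 1).comp h1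
      · filter_upwards with n
        simp only [mem_compl_iff, mem_singleton_iff]
        intro h
        have h' : (1 + ((n:ℝ)+1)⁻¹ : ℝ) = 1 := by exact_mod_cast h
        have h'' : ((n:ℝ)+1)⁻¹ = 0 := by linarith
        rw [inv_eq_zero] at h''
        have : (0:ℝ) < (n:ℝ)+1 := by positivity
        linarith
    exact hseq.frequently (Frequently.of_forall (fun n =>
      hreal _ (by positivity)))
  have := hfa.eqOn_of_preconnected_of_frequently_eq hga hUconn h1U hfreq
  exact this hz

lemma intOn_expm1 {β : ℝ} (hβ0 : 0 < β) (hβ1 : β < 1) {z : ℂ} (hz : 0 < z.re) :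
    IntegrableOn (fun t : ℝ => (Complex.exp (-z * t) - 1) * ((t ^ (-1 - β) : ℝ) : ℂ))
      (Ioi 0) := by
  have hmeas : ∀ s : Set ℝ, MeasurableSet s → s ⊆ Ioi 0 → AEStronglyMeasurable
      (fun t : ℝ => (Complex.exp (-z * t) - 1) * ((t ^ (-1 - β) : ℝ) : ℂ))
      (volume.restrict s) := by
    intro s hs hsub
    apply ContinuousOn.aestronglyMeasurable _ hs
    refine ContinuousOn.mul (Continuous.continuousOn (by continuity)) ?_
    exact continuous_ofReal.comp_continuousOn
      (fun t ht => (Real.continuousAt_rpow_const t (-1-β)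
        (Or.inl (ne_of_gt (hsub ht)))).continuousWithinAt)
  rw [← Ioc_union_Ioi_eq_Ioi (le_of_lt one_pos), integrableOn_union]
  constructor
  · -- on (0, 1]
    have hdom : IntegrableOn (fun t : ℝ => (‖z‖ * Real.exp ‖z‖) * t ^ (-β)) (Ioc 0 1) := by
      apply Integrable.const_mul
      exact (intervalIntegral.intervalIntegrable_rpow' (by linarith : (-1:ℝ) < -β)).1
    refine hdom.mono' (hmeas _ measurableSet_Ioc (Ioc_subset_Ioi_self)) ?_
    filter_upwards [ae_restrict_mem measurableSet_Ioc] with t ht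
    obtain ⟨ht0, ht1⟩ := ht
    rw [norm_mul, Complex.norm_real, Real.norm_eq_abs,
      _root_.abs_of_nonneg (Real.rpow_nonneg ht0.le _)]
    have h1 : ‖Complex.exp (-z * t) - 1‖ ≤ ‖-z * t‖ * Real.exp ‖-z * t‖ :=
      norm_exp_sub_one_le' _
    have h2 : ‖-z * (t:ℂ)‖ = ‖z‖ * t := by
      rw [norm_mul, norm_neg, Complex.norm_real, Real.norm_eq_abs, _root_.abs_of_nonneg ht0.le]
    have h3 : ‖z‖ * t * Real.exp (‖z‖ * t) ≤ ‖z‖ * t * Real.exp ‖z‖ := by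
      have : Real.exp (‖z‖ * t) ≤ Real.exp ‖z‖ :=
        Real.exp_le_exp.2 (by nlinarith [norm_nonneg z])
      exact mul_le_mul_of_nonneg_left this (mul_nonneg (norm_nonneg z) ht0.le)
    have h4 : ‖Complex.exp (-z * t) - 1‖ ≤ ‖z‖ * t * Real.exp ‖z‖ := by
      rw [h2] at h1; linarith
    calc ‖Complex.exp (-z * t) - 1‖ * t ^ (-1 - β)
        ≤ (‖z‖ * t * Real.exp ‖z‖) * t ^ (-1 - β) := by
          apply mul_le_mul_of_nonneg_right h4 (Real.rpow_nonneg ht0.le _)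
      _ = (‖z‖ * Real.exp ‖z‖) * t ^ (-β) := by
          rw [show (-β : ℝ) = 1 + (-1 - β) by ring, Real.rpow_one_add' ht0.le
            (by intro h; nlinarith : (1:ℝ) + (-1 - β) ≠ 0)]
          ring
  · -- on (1, ∞)
    have hdom : IntegrableOn (fun t : ℝ => 2 * t ^ (-1 - β)) (Ioi 1) :=
      (integrableOn_Ioi_rpow_of_lt (by linarith : (-1-β:ℝ) < -1) one_pos).const_mul 2
    refine hdom.mono' (hmeas _ measurableSet_Ioi (Ioi_subset_Ioi (le_of_lt one_pos))) ?_
    filter_upwards [ae_restrict_mem measurableSet_Ioi] with t ht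
    have ht0 : (0:ℝ) < t := lt_trans one_pos ht
    rw [norm_mul, Complex.norm_real, Real.norm_eq_abs,
      _root_.abs_of_nonneg (Real.rpow_nonneg ht0.le _)]
    apply mul_le_mul_of_nonneg_right _ (Real.rpow_nonneg ht0.le _)
    calc ‖Complex.exp (-z * t) - 1‖ ≤ ‖Complex.exp (-z * t)‖ + 1 := by
          simpa using norm_sub_le (Complex.exp (-z * t)) 1
      _ ≤ 2 := by
          rw [norm_exp_neg_mul]
          have : Real.exp (-z.re * t) ≤ Real.exp 0 :=
            Real.exp_le_exp.2 (by nlinarith)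
          simp only [Real.exp_zero] at this
          linarith

lemma integral_expm1 {β : ℝ} (hβ0 : 0 < β) (hβ1 : β < 1) {z : ℂ} (hz : 0 < z.re) :
    ∫ t in Ioi (0:ℝ), (Complex.exp (-z * t) - 1) * ((t ^ (-1 - β) : ℝ) : ℂ)
      = (Real.Gamma (-β) : ℂ) * z ^ (β : ℂ) := by
  have hβ' : (-1 : ℝ) < -β := by linarith
  have hzne : z ≠ 0 := by
    intro h; rw [h] at hz; simp at hz
  set u : ℝ → ℂ := fun t => Complex.exp (-z * t) - 1 with hu_def
  set u' : ℝ → ℂ := fun t => -z * Complex.exp (-z * t) with hu'_def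
  set v : ℝ → ℂ := fun t => -(β : ℂ)⁻¹ * ((t ^ (-β) : ℝ) : ℂ) with hv_def
  set v' : ℝ → ℂ := fun t => ((t ^ (-1 - β) : ℝ) : ℂ) with hv'_def
  have hu : ∀ t ∈ Ioi (0:ℝ), HasDerivAt u (u' t) t := by
    intro t _
    have h1 : HasDerivAt (fun w : ℂ => -z * w) (-z) (t : ℂ) := by
      simpa using (hasDerivAt_id (t:ℂ)).const_mul (-z)
    have h2 : HasDerivAt (fun w : ℂ => Complex.exp (-z * w) - 1)
        (Complex.exp (-z * t) * -z) (t : ℂ) :=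
      ((Complex.hasDerivAt_exp _).comp _ h1).sub_const 1
    simpa [hu_def, hu'_def, mul_comm] using h2.comp_ofReal
  have hv : ∀ t ∈ Ioi (0:ℝ), HasDerivAt v (v' t) t := by
    intro t ht
    have ht0 : (0:ℝ) < t := ht
    have h1 : HasDerivAt (fun t : ℝ => t ^ (-β)) (-β * t ^ (-β - 1)) t :=
      Real.hasDerivAt_rpow_const (Or.inl (ne_of_gt ht0))
    have h2 := (h1.ofReal_comp).const_mul (-(β : ℂ)⁻¹)
    refine h2.congr_deriv ?_
    rw [hv'_def]
    push_cast
    rw [show (-1 - β : ℝ) = -β - 1 by ring]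
    have hβne : (β:ℂ) ≠ 0 := Complex.ofReal_ne_zero.2 (ne_of_gt hβ0)
    field_simp
  have huv' : IntegrableOn (u * v') (Ioi 0) := intOn_expm1 hβ0 hβ1 hz
  have hu'v : IntegrableOn (u' * v) (Ioi 0) := by
    have base := (intOn_rpow_cexp hβ' hz).const_mul (z * (β : ℂ)⁻¹)
    apply MeasureTheory.IntegrableOn.congr_fun base _ measurableSet_Ioi
    intro t _
    simp only [hu'_def, hv_def, Pi.mul_apply]
    ring
  have h_zero : Tendsto (u * v) (nhdsWithin 0 (Ioi 0)) (nhds 0) := by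
    have hd : HasDerivAt (fun t : ℝ => Complex.exp (-z * t)) (-z) 0 := by
      have h1 : HasDerivAt (fun w : ℂ => -z * w) (-z) ((0:ℝ) : ℂ) := by
        simpa using (hasDerivAt_id ((0:ℝ):ℂ)).const_mul (-z)
      have h2 : HasDerivAt (fun w : ℂ => Complex.exp (-z * w))
          (Complex.exp (-z * 0) * -z) ((0:ℝ):ℂ) := (Complex.hasDerivAt_exp _).comp _ h1
      simpa using h2.comp_ofReal
    have hslope := (hasDerivAt_iff_tendsto_slope.1 hd).mono_left
      (nhdsWithin_mono 0 (fun x hx => ne_of_gt hx))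
    have hr : Tendsto (fun t : ℝ => t ^ (1 - β)) (nhdsWithin 0 (Ioi 0)) (nhds 0) := by
      have hc : ContinuousAt (fun t : ℝ => t ^ (1 - β)) 0 :=
        Real.continuousAt_rpow_const 0 (1 - β) (Or.inr (by linarith))
      have h2 := (hc.tendsto).mono_left (nhdsWithin_le_nhds (s := Ioi (0:ℝ)))
      rwa [Real.zero_rpow (by intro h; nlinarith : (1:ℝ) - β ≠ 0)] at h2
    have hrC : Tendsto (fun t : ℝ => ((t ^ (1 - β) : ℝ) : ℂ)) (nhdsWithin 0 (Ioi 0))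
        (nhds 0) := by
      have := (Complex.continuous_ofReal.tendsto 0).comp hr
      simpa [Function.comp_def] using this
    have hmul := (hslope.mul hrC).mul_const (-(β : ℂ)⁻¹)
    rw [show (-z * (0:ℂ) * -(β:ℂ)⁻¹ : ℂ) = 0 by ring] at hmul
    apply hmul.congr'
    filter_upwards [self_mem_nhdsWithin] with t ht
    have ht0 : (0:ℝ) < t := ht
    have hrw : (t:ℝ)⁻¹ * t ^ (1 - β) = t ^ (-β) := by
      rw [← Real.rpow_neg_one t, ← Real.rpow_add ht0]
      congr 1; ring
    have hcast : ((t ^ (-β) : ℝ) : ℂ) = ((t : ℝ)⁻¹ : ℝ) * ((t ^ (1 - β) : ℝ) : ℂ) := by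
      rw [← hrw]; push_cast; ring
    have hf0 : Complex.exp (-z * ((0:ℝ):ℂ)) = 1 := by simp
    simp only [Pi.mul_apply, hu_def, hv_def, slope_def_module, hf0, sub_zero, real_smul]
    rw [hcast]
    push_cast
    ring
  have h_infty : Tendsto (u * v) atTop (nhds 0) := by
    have hexp : Tendsto (fun t : ℝ => Complex.exp (-z * t)) atTop (nhds 0) := by
      rw [tendsto_zero_iff_norm_tendsto_zero]
      simp only [norm_exp_neg_mul]
      have h1 : Tendsto (fun t : ℝ => z.re * t) atTop atTop :=
        Tendsto.const_mul_atTop hz tendsto_id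
      have h2 : Tendsto (fun t : ℝ => -z.re * t) atTop atBot := by
        have h2' := tendsto_neg_atTop_atBot.comp h1
        exact h2'.congr fun t => by simp [neg_mul]
      exact Real.tendsto_exp_atBot.comp h2
    have hpow : Tendsto (fun t : ℝ => ((t ^ (-β) : ℝ) : ℂ)) atTop (nhds 0) := by
      have h1 : Tendsto (fun t : ℝ => t ^ (-β)) atTop (nhds 0) :=
        tendsto_rpow_neg_atTop hβ0
      simpa [Function.comp_def] using (Complex.continuous_ofReal.tendsto 0).comp h1
    have h3 := (hexp.sub_const 1).mul (hpow.const_mul (-(β : ℂ)⁻¹))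
    rw [show ((0:ℂ) - 1) * (-(β:ℂ)⁻¹ * 0) = 0 by ring] at h3
    exact h3
  have key := MeasureTheory.integral_Ioi_mul_deriv_eq_deriv_mul hu hv huv' hu'v h_zero h_infty
  have hlap := laplace_rpow hβ0 hβ1 hz
  have hIv : ∫ t in Ioi (0:ℝ), u' t * v t
      = (z * (β:ℂ)⁻¹) * ((Real.Gamma (1 - β) : ℂ) * z ^ ((β : ℂ) - 1)) := by
    rw [← hlap, ← MeasureTheory.integral_const_mul]
    apply MeasureTheory.setIntegral_congr_fun measurableSet_Ioi
    intro t _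
    simp only [hu'_def, hv_def]
    ring
  have hG : (Real.Gamma (1 - β) : ℂ) = (-β : ℝ) * (Real.Gamma (-β) : ℂ) := by
    have := Real.Gamma_add_one (show (-β : ℝ) ≠ 0 by simpa using (ne_of_gt hβ0))
    rw [show (1:ℝ) - β = -β + 1 by ring, this]
    push_cast; ring
  have hzpow : z ^ ((β : ℂ) - 1) * z = z ^ (β : ℂ) := by
    have h := Complex.cpow_add ((β:ℂ)-1) 1 hzne
    rw [Complex.cpow_one] at h
    rw [← h]; congr 1; ring
  have hβne : (β:ℂ) ≠ 0 := Complex.ofReal_ne_zero.2 (ne_of_gt hβ0)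
  calc ∫ t in Ioi (0:ℝ), (Complex.exp (-z * t) - 1) * ((t ^ (-1 - β) : ℝ) : ℂ)
      = ∫ t in Ioi (0:ℝ), u t * v' t := by rfl
    _ = 0 - 0 - ∫ t in Ioi (0:ℝ), u' t * v t := key
    _ = -((z * (β:ℂ)⁻¹) * ((Real.Gamma (1 - β) : ℂ) * z ^ ((β : ℂ) - 1))) := by
        rw [hIv]; ring
    _ = (Real.Gamma (-β) : ℂ) * z ^ (β : ℂ) := by
        rw [hG, ← hzpow]
        push_cast
        field_simp

theorem gts_char_exponent_positive_part
    (αp lp βp ξ : ℝ)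
    (hβp0 : 0 < βp) (hβp1 : βp < 1) (hlp : 0 < lp) (hαp : 0 < αp) :
    ∫ y in Set.Ioi (0 : ℝ),
        (Complex.exp (Complex.I * (y : ℂ) * (ξ : ℂ)) - 1) *
          ((αp * Real.exp (-lp * y) / y ^ (1 + βp) : ℝ) : ℂ) =
      (αp : ℂ) * (Real.Gamma (-βp) : ℂ) *
        (((lp : ℂ) - Complex.I * (ξ : ℂ)) ^ (βp : ℂ) - (lp : ℂ) ^ (βp : ℂ)) := by
  set z₁ : ℂ := (lp : ℂ) - Complex.I * (ξ : ℂ) with hz₁_def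
  set z₂ : ℂ := (lp : ℂ) with hz₂_def
  have hz1 : 0 < z₁.re := by
    simp [hz₁_def, Complex.sub_re, Complex.mul_re]
    exact hlp
  have hz2 : 0 < z₂.re := by simpa [hz₂_def] using hlp
  have h1 := integral_expm1 hβp0 hβp1 hz1
  have h2 := integral_expm1 hβp0 hβp1 hz2
  have hint1 := intOn_expm1 hβp0 hβp1 hz1
  have hint2 := intOn_expm1 hβp0 hβp1 hz2
  have hptwise : ∀ y ∈ Ioi (0:ℝ),
      (Complex.exp (Complex.I * (y : ℂ) * (ξ : ℂ)) - 1) *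
          ((αp * Real.exp (-lp * y) / y ^ (1 + βp) : ℝ) : ℂ)
        = (αp : ℂ) * ((Complex.exp (-z₁ * y) - 1) * ((y ^ (-1 - βp) : ℝ) : ℂ)
            - (Complex.exp (-z₂ * y) - 1) * ((y ^ (-1 - βp) : ℝ) : ℂ)) := by
    intro y hy
    have hy0 : (0:ℝ) < y := hy
    have hpow : ((y ^ (1 + βp) : ℝ) : ℂ)⁻¹ = ((y ^ (-1 - βp) : ℝ) : ℂ) := by
      rw [show (-1 - βp : ℝ) = -(1 + βp) by ring, Real.rpow_neg hy0.le]
      push_cast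
      rfl
    have hexp1 : Complex.exp (-z₁ * y) =
        Complex.exp (Complex.I * (y : ℂ) * (ξ : ℂ)) * Complex.exp (-z₂ * y) := by
      rw [← Complex.exp_add]
      congr 1
      rw [hz₁_def, hz₂_def]; ring
    have hexp2 : ((Real.exp (-lp * y) : ℝ) : ℂ) = Complex.exp (-z₂ * y) := by
      rw [Complex.ofReal_exp, hz₂_def]
      push_cast
      ring_nf
    rw [div_eq_mul_inv]
    push_cast
    rw [hpow, show Complex.exp (-(lp:ℂ) * y) = Complex.exp (-z₂ * y) from by rw [hz₂_def],
      hexp1]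
    ring
  rw [MeasureTheory.setIntegral_congr_fun measurableSet_Ioi hptwise,
    MeasureTheory.integral_const_mul, MeasureTheory.integral_sub hint1 hint2, h1, h2]
  ring
end

section
/- Fix λ > 0 and ξ ∈ ℝ. As β → 0⁺, Γ(-β) ((λ - iξ)^β - λ^β) converges to -log(1 - iξ/λ), where log is the principal branch of the complex logarithm. -/
/-!
Since `Γ(1 - β) = -β Γ(-β)` and `Γ(1) = 1`, the factor `Γ(-β)` behaves like `-1/β`, so the
expression tends to minus the derivative of `β ↦ (λ - iξ)^β - λ^β` at `0`, which is
`log (λ - iξ) - log λ = log (1 - iξ/λ)` because `λ > 0`.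
-/

open Complex Filter Topology

theorem Real.tendsto_neg_mul_Gamma_neg_nhdsNE_zero :
    Tendsto (fun s : ℝ => -s * Real.Gamma (-s)) (𝓝[≠] 0) (𝓝 1) := by
  have hGamma_one : ContinuousAt Real.Gamma 1 :=
    (Real.differentiableAt_Gamma fun m => by
      linarith [(m.cast_nonneg : (0 : ℝ) ≤ m)]).continuousAt
  have hcont : ContinuousAt (fun s : ℝ => Real.Gamma (-s + 1)) 0 :=
    ContinuousAt.comp (g := Real.Gamma) (by simpa using hGamma_one) (by fun_prop)
  have hlim : Tendsto (fun s : ℝ => Real.Gamma (-s + 1)) (𝓝[≠] 0) (𝓝 1) := by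
    simpa using hcont.tendsto.mono_left nhdsWithin_le_nhds
  refine hlim.congr' ?_
  filter_upwards [self_mem_nhdsWithin] with s hs using Real.Gamma_add_one (neg_ne_zero.mpr hs)

theorem Complex.tendsto_cpow_ofReal_sub_one_div {z : ℂ} (hz : z ≠ 0) :
    Tendsto (fun t : ℝ => (z ^ (t : ℂ) - 1) / t) (𝓝[≠] 0) (𝓝 (log z)) := by
  have hderiv : HasDerivAt (fun t : ℝ => z ^ (t : ℂ)) (log z) 0 := by
    simpa using (hasStrictDerivAt_const_cpow (y := 0) (Or.inl hz)).hasDerivAt.comp_ofReal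
  simpa [div_eq_inv_mul] using hderiv.tendsto_slope_zero

theorem tendsto_Gamma_neg_mul_cpow_sub_cpow {z w : ℂ} (hz : z ≠ 0) (hw : w ≠ 0) :
    Tendsto (fun β : ℝ => (Real.Gamma (-β) : ℂ) * (z ^ (β : ℂ) - w ^ (β : ℂ)))
      (𝓝[≠] 0) (𝓝 (log w - log z)) := by
  -- `Γ(-β) (z^β - w^β) = (-β Γ(-β)) ((w^β - 1)/β - (z^β - 1)/β)`
  have hlim :=
    ((continuous_ofReal.tendsto 1).comp Real.tendsto_neg_mul_Gamma_neg_nhdsNE_zero).mul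
      ((tendsto_cpow_ofReal_sub_one_div hw).sub (tendsto_cpow_ofReal_sub_one_div hz))
  rw [ofReal_one, one_mul] at hlim
  refine hlim.congr' ?_
  filter_upwards [self_mem_nhdsWithin] with β (hβ : β ≠ 0)
  have hβ' : (β : ℂ) ≠ 0 := ofReal_ne_zero.mpr hβ
  simp only [Function.comp_apply, ofReal_mul, ofReal_neg]
  field_simp
  ring

theorem gts_limit_bilateral_gamma (l ξ : ℝ) (hl : 0 < l) :
    Filter.Tendsto
      (fun β : ℝ =>
        (Real.Gamma (-β) : ℂ) *
          (((l : ℂ) - Complex.I * (ξ : ℂ)) ^ (β : ℂ) - (l : ℂ) ^ (β : ℂ)))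
      (nhdsWithin 0 (Set.Ioi 0))
      (nhds (-Complex.log (1 - Complex.I * (ξ : ℂ) / (l : ℂ)))) := by
  have hl' : (l : ℂ) ≠ 0 := ofReal_ne_zero.mpr hl.ne'
  have hz : (l : ℂ) - I * ξ ≠ 0 := fun h => by simpa [hl.ne'] using congr_arg re h
  have hlog : -log (1 - I * ξ / l) = log l - log (l - I * ξ) := by
    have hquot : 1 - I * ξ / l = (l - I * ξ) * (l⁻¹ : ℝ) := by push_cast; field_simp
    rw [hquot, log_mul_ofReal _ (inv_pos.mpr hl) _ hz, Real.log_inv, ofReal_neg,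
      ofReal_log hl.le]
    ring
  rw [hlog]
  exact (tendsto_Gamma_neg_mul_cpow_sub_cpow hz hl').mono_left (nhdsGT_le_nhdsNE 0)
end

section
/- Let Ψ be the GTS characteristic exponent with cumulants (κ_k), so that for each t > 0 the function ξ ↦ exp(tΨ(ξ)) is the characteristic function of Y_t. Then the characteristic function of (Y_t - tκ₁)/√(tκ₂) converges pointwise to e^{-ξ²/2} as t → +∞; i.e., the normalized GTS Lévy process converges in distribution to a standard normal. -/
/-!
Write `Ψ(u) = iκ₁u - κ₂u²/2 + R(u)`. Both tempered-stable terms are complex powers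
`(λ ∓ iu)^β` of a point of the slit plane, so they are smooth near `0` and the Peano form of
Taylor's theorem gives `R(u) = o(u²)`; the Gamma-function recursion `Γ(s + 1) = sΓ(s)` turns the
Taylor coefficients into the cumulants. With `u = ξ/√(tκ₂)` the exponent of the normalized
characteristic function is `tΨ(u) - iξtκ₁/√(tκ₂) = -ξ²/2 + tR(u)`, and
`|tR(u)| = (ξ²/κ₂)·|R(u)|/u² → 0`.
-/

open Complex Filter

/-- The GTS characteristic exponent. -/
noncomputable def gtsPsi (μ βp βm αp αm lp lm : ℝ) (ξ : ℝ) : ℂ :=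
  Complex.I * (μ : ℂ) * (ξ : ℂ) +
    (αp : ℂ) * (Real.Gamma (-βp) : ℂ) *
      (((lp : ℂ) - Complex.I * (ξ : ℂ)) ^ (βp : ℂ) - (lp : ℂ) ^ (βp : ℂ)) +
    (αm : ℂ) * (Real.Gamma (-βm) : ℂ) *
      (((lm : ℂ) + Complex.I * (ξ : ℂ)) ^ (βm : ℂ) - (lm : ℂ) ^ (βm : ℂ))

open Asymptotics Topology

theorem isLittleO_sub_taylor_two {E : Type*} [NormedAddCommGroup E] [NormedSpace ℝ E]
    {f f' : ℝ → E} {c : E} {x₀ : ℝ} (hf : ∀ᶠ x in 𝓝 x₀, HasDerivAt f (f' x) x)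
    (hf' : HasDerivAt f' c x₀) :
    (fun x => f x - f x₀ - (x - x₀) • f' x₀ - ((x - x₀) ^ 2 / 2) • c) =o[𝓝 x₀]
      fun x => (x - x₀) ^ 2 := by
  obtain ⟨r, hr, hball⟩ := Metric.eventually_nhds_iff_ball.mp hf
  have hnhds : 𝓝[Metric.ball x₀ r] x₀ = 𝓝 x₀ :=
    nhdsWithin_eq_nhds.mpr (Metric.ball_mem_nhds x₀ hr)
  set g : ℝ → E := fun x => f x - (x - x₀) • f' x₀ - ((x - x₀) ^ 2 / 2) • c
  have hg : ∀ x ∈ Metric.ball x₀ r,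
      HasDerivWithinAt g (f' x - f' x₀ - (x - x₀) • c) (Metric.ball x₀ r) x := by
    intro x hx
    have hsq : HasDerivAt (fun x => (x - x₀) ^ 2 / 2) (x - x₀) x := by
      simpa using (((hasDerivAt_id x).sub_const x₀).pow 2).div_const 2
    exact (((hball x hx).sub (((hasDerivAt_id x).sub_const x₀).smul_const (f' x₀))).sub
      (hsq.smul_const c)).hasDerivWithinAt.congr_deriv (by simp)
  have hg' : (fun x => f' x - f' x₀ - (x - x₀) • c) =o[𝓝[Metric.ball x₀ r] x₀]
      fun x => (x - x₀) ^ 1 := by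
    simpa [hnhds] using hasDerivAt_iff_isLittleO.mp hf'
  have := (convex_ball x₀ r).isLittleO_pow_succ_real (Metric.mem_ball_self hr) hg hg'
  simpa [g, hnhds, sub_right_comm _ (f x₀)] using this

theorem hasDerivAt_cpow_add_mul_ofReal {z₀ : ℂ} (ε γ : ℂ) {x : ℝ}
    (hx : z₀ + ε * x ∈ slitPlane) :
    HasDerivAt (fun u : ℝ => (z₀ + ε * u) ^ γ) (γ * (z₀ + ε * x) ^ (γ - 1) * ε) x := by
  have hlin : HasDerivAt (fun z : ℂ => z₀ + ε * z) ε x := by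
    simpa using ((hasDerivAt_id (x : ℂ)).const_mul ε).const_add z₀
  exact (hlin.cpow_const hx).comp_ofReal

theorem isLittleO_cpow_add_mul_sub_taylor_two {z₀ : ℂ} (hz₀ : z₀ ∈ slitPlane) (ε γ : ℂ) :
    (fun u : ℝ => (z₀ + ε * u) ^ γ - (z₀ ^ γ + γ * z₀ ^ (γ - 1) * ε * u
      + γ * (γ - 1) * z₀ ^ (γ - 2) * ε ^ 2 * u ^ 2 / 2)) =o[𝓝 0] fun u => u ^ 2 := by
  have hnear : ∀ᶠ u : ℝ in 𝓝 0, z₀ + ε * u ∈ slitPlane := by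
    have hcont : Continuous fun u : ℝ => z₀ + ε * u := by fun_prop
    exact hcont.continuousAt.preimage_mem_nhds (by simpa using isOpen_slitPlane.mem_nhds hz₀)
  have h0 : z₀ + ε * (0 : ℝ) = z₀ := by simp
  have hderiv₂ : HasDerivAt (fun u : ℝ => γ * (z₀ + ε * u) ^ (γ - 1) * ε)
      (γ * ((γ - 1) * z₀ ^ (γ - 2) * ε) * ε) 0 := by
    have := ((hasDerivAt_cpow_add_mul_ofReal ε (γ - 1) (h0 ▸ hz₀)).const_mul γ).mul_const ε
    rwa [h0, sub_sub, one_add_one_eq_two] at this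
  have := isLittleO_sub_taylor_two
    (hnear.mono fun u hu => hasDerivAt_cpow_add_mul_ofReal ε γ hu) hderiv₂
  simp only [sub_zero, h0, real_smul] at this
  refine this.congr_left fun u => ?_
  push_cast
  ring

theorem Real.Gamma_one_sub_div_rpow {β l : ℝ} (hβ : β ≠ 0) (hl : 0 ≤ l) :
    Real.Gamma (1 - β) / l ^ (1 - β) = -(β * Real.Gamma (-β) * l ^ (β - 1)) := by
  rw [show 1 - β = -β + 1 by ring, Real.Gamma_add_one (neg_ne_zero.mpr hβ),
    show β - 1 = -(-β + 1) by ring, Real.rpow_neg hl]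
  ring

theorem Real.Gamma_two_sub_div_rpow {β l : ℝ} (hβ₀ : β ≠ 0) (hβ₁ : β ≠ 1)
    (hl : 0 ≤ l) :
    Real.Gamma (2 - β) / l ^ (2 - β) = β * (β - 1) * Real.Gamma (-β) * l ^ (β - 2) := by
  rw [show 2 - β = -β + 1 + 1 by ring, Real.Gamma_add_one (by contrapose! hβ₁; linarith),
    Real.Gamma_add_one (neg_ne_zero.mpr hβ₀), show β - 2 = -(-β + 1 + 1) by ring,
    Real.rpow_neg hl]
  ring

theorem Complex.ofReal_cpow_ofReal_sub_natCast {x : ℝ} (hx : 0 ≤ x) (y : ℝ) (n : ℕ) :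
    (x : ℂ) ^ ((y : ℂ) - n) = ((x ^ (y - n) : ℝ) : ℂ) := by
  rw [ofReal_cpow hx]
  push_cast
  rfl

-- Closed forms of the cumulants `κ₁ = Ψ'(0)/i` and `κ₂ = -Ψ''(0)`.
noncomputable def gtsCumulant₁ (μ βp βm αp αm lp lm : ℝ) : ℝ :=
  μ + αp * Real.Gamma (1 - βp) / lp ^ ((1 : ℝ) - βp)
    - αm * Real.Gamma (1 - βm) / lm ^ ((1 : ℝ) - βm)

noncomputable def gtsCumulant₂ (βp βm αp αm lp lm : ℝ) : ℝ :=
  αp * Real.Gamma (2 - βp) / lp ^ ((2 : ℝ) - βp)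
    + αm * Real.Gamma (2 - βm) / lm ^ ((2 : ℝ) - βm)

theorem gtsCumulant₂_pos {βp βm αp αm lp lm : ℝ} (hβp : βp < 2) (hβm : βm < 2)
    (hlp : 0 < lp) (hlm : 0 < lm) (hαp : 0 ≤ αp) (hαm : 0 ≤ αm) (hα : 0 < αp ∨ 0 < αm) :
    0 < gtsCumulant₂ βp βm αp αm lp lm := by
  have hΓp := Real.Gamma_pos_of_pos (sub_pos.mpr hβp)
  have hΓm := Real.Gamma_pos_of_pos (sub_pos.mpr hβm)
  rcases hα with hα | hα
  · exact add_pos_of_pos_of_nonneg (by positivity) (by positivity)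
  · exact add_pos_of_nonneg_of_pos (by positivity) (by positivity)

theorem isLittleO_gtsPsi_sub_quadratic {μ βp βm αp αm lp lm : ℝ} (hβp₀ : βp ≠ 0)
    (hβp₁ : βp ≠ 1) (hβm₀ : βm ≠ 0) (hβm₁ : βm ≠ 1) (hlp : 0 < lp) (hlm : 0 < lm) :
    (fun u : ℝ => gtsPsi μ βp βm αp αm lp lm u -
      (I * gtsCumulant₁ μ βp βm αp αm lp lm * u - gtsCumulant₂ βp βm αp αm lp lm * u ^ 2 / 2))
      =o[𝓝 0] fun u => u ^ 2 := by
  have hp := isLittleO_cpow_add_mul_sub_taylor_two (ofReal_mem_slitPlane.mpr hlp) (-I) βp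
  have hm := isLittleO_cpow_add_mul_sub_taylor_two (ofReal_mem_slitPlane.mpr hlm) I βm
  refine ((hp.const_mul_left (αp * Real.Gamma (-βp))).add
    (hm.const_mul_left (αm * Real.Gamma (-βm)))).congr_left fun u => ?_
  have hp₁ := ofReal_cpow_ofReal_sub_natCast hlp.le βp 1
  have hp₂ := ofReal_cpow_ofReal_sub_natCast hlp.le βp 2
  have hm₁ := ofReal_cpow_ofReal_sub_natCast hlm.le βm 1
  have hm₂ := ofReal_cpow_ofReal_sub_natCast hlm.le βm 2
  push_cast at hp₁ hp₂ hm₁ hm₂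
  simp only [gtsPsi, gtsCumulant₁, gtsCumulant₂, mul_div_assoc, hp₁, hp₂, hm₁, hm₂, neg_sq, I_sq,
    neg_mul, ← sub_eq_add_neg,
    Real.Gamma_one_sub_div_rpow hβp₀ hlp.le, Real.Gamma_one_sub_div_rpow hβm₀ hlm.le,
    Real.Gamma_two_sub_div_rpow hβp₀ hβp₁ hlp.le, Real.Gamma_two_sub_div_rpow hβm₀ hβm₁ hlm.le]
  push_cast
  ring

theorem tendsto_normalized_charFun_of_isLittleO {ψ : ℝ → ℂ} {κ₁ κ₂ : ℝ} (hκ₂ : 0 < κ₂)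
    (hψ : (fun u : ℝ => ψ u - (I * κ₁ * u - κ₂ * u ^ 2 / 2)) =o[𝓝 0] fun u => u ^ 2) (ξ : ℝ) :
    Tendsto (fun t : ℝ => exp (-I * ((t * κ₁ / √(t * κ₂) : ℝ) : ℂ) * ξ) *
        exp (t * ψ (ξ / √(t * κ₂)))) atTop (𝓝 (exp (-(ξ : ℂ) ^ 2 / 2))) := by
  set u : ℝ → ℝ := fun t => ξ / √(t * κ₂)
  set R : ℝ → ℂ := fun u => ψ u - (I * κ₁ * u - κ₂ * u ^ 2 / 2)
  have hu : Tendsto u atTop (𝓝 0) :=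
    tendsto_const_nhds.div_atTop (Real.tendsto_sqrt_atTop.comp (tendsto_id.atTop_mul_const hκ₂))
  have hscale : ∀ᶠ t in atTop, t * u t ^ 2 = ξ ^ 2 / κ₂ ∧
      -I * ((t * κ₁ / √(t * κ₂) : ℝ) : ℂ) * ξ + t * ψ (u t) = t * R (u t) + -(ξ : ℂ) ^ 2 / 2 := by
    filter_upwards [eventually_gt_atTop 0] with t ht
    have hs : √(t * κ₂) ^ 2 = t * κ₂ := Real.sq_sqrt (by positivity)
    have hs0 : √(t * κ₂) ≠ 0 := (Real.sqrt_pos.mpr (by positivity)).ne'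
    constructor
    · simp only [u, div_pow, hs]
      field_simp
    · have hsC : (√(t * κ₂) : ℂ) ^ 2 = t * κ₂ := by exact_mod_cast hs
      have hsc : (√(t * κ₂) : ℂ) ≠ 0 := ofReal_ne_zero.mpr hs0
      simp only [R, u]
      push_cast
      field_simp
      linear_combination (ξ ^ 2 : ℂ) * hsC
  have hrem : Tendsto (fun t : ℝ => (t : ℂ) * R (u t)) atTop (𝓝 0) := by
    have hbounded : (fun t : ℝ => t • u t ^ 2) =O[atTop] fun _ => (1 : ℝ) :=
      (isBigO_const_one ℝ (ξ ^ 2 / κ₂) atTop).congr' (hscale.mono fun t ht => ht.1.symm) .rfl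
    have := ((isBigO_refl (fun t : ℝ => t) atTop).smul_isLittleO
      (hψ.comp_tendsto hu)).trans_isBigO hbounded
    simpa [real_smul] using (isLittleO_one_iff ℝ).mp this
  have hlim := (continuous_exp.tendsto _).comp (hrem.add_const (-(ξ : ℂ) ^ 2 / 2))
  rw [zero_add] at hlim
  refine hlim.congr' (hscale.mono fun t ht => ?_)
  rw [Function.comp_apply, ← ht.2, exp_add]

theorem gts_process_asymptotic_normality
    (μ βp βm αp αm lp lm : ℝ)
    (hβp0 : 0 < βp) (hβp1 : βp < 1) (hβm0 : 0 < βm) (hβm1 : βm < 1)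
    (hlp : 0 < lp) (hlm : 0 < lm) (hαp : 0 ≤ αp) (hαm : 0 ≤ αm)
    (hα : 0 < αp ∨ 0 < αm)
    (κ₁ κ₂ : ℝ)
    (hκ₁ : κ₁ = μ + αp * Real.Gamma (1 - βp) / lp ^ ((1 : ℝ) - βp)
      - αm * Real.Gamma (1 - βm) / lm ^ ((1 : ℝ) - βm))
    (hκ₂ : κ₂ = αp * Real.Gamma (2 - βp) / lp ^ ((2 : ℝ) - βp) +
      αm * Real.Gamma (2 - βm) / lm ^ ((2 : ℝ) - βm))
    (ξ : ℝ) :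
    Filter.Tendsto
      (fun t : ℝ =>
        Complex.exp (-Complex.I * ((t * κ₁ / Real.sqrt (t * κ₂) : ℝ) : ℂ) * (ξ : ℂ)) *
          Complex.exp ((t : ℂ) * gtsPsi μ βp βm αp αm lp lm (ξ / Real.sqrt (t * κ₂))))
      Filter.atTop
      (nhds (Complex.exp (-((ξ : ℂ) ^ 2) / 2))) := by
  obtain rfl : κ₁ = gtsCumulant₁ μ βp βm αp αm lp lm := hκ₁
  obtain rfl : κ₂ = gtsCumulant₂ βp βm αp αm lp lm := hκ₂
  have hκ₂pos : 0 < gtsCumulant₂ βp βm αp αm lp lm :=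
    gtsCumulant₂_pos (by linarith) (by linarith) hlp hlm hαp hαm hα
  exact tendsto_normalized_charFun_of_isLittleO hκ₂pos (isLittleO_gtsPsi_sub_quadratic hβp0.ne'
    hβp1.ne hβm0.ne' hβm1.ne hlp hlm) ξ
end

section
/- The two series representations of the Kolmogorov distribution agree: for every x > 0, 1 - 2 Σ_{k=1}^∞ (-1)^{k-1} e^{-2k²x²} = (√(2π)/x) Σ_{k=1}^∞ e^{-(2k-1)²π²/(8x²)}. -/
/-!
Both sides are the same theta series. Poisson summation turns the alternating Gaussian sum
`∑_{n ∈ ℤ} (-1)^n e^{-2n²x²}` into `√(π / 2x²) ∑_{n ∈ ℤ} e^{-π²(n + 1/2)²/2x²}`. Folding the first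
sum with `n ↦ -n` gives `1 - 2 ∑_{k ≥ 1} (-1)^{k-1} e^{-2k²x²}`, and folding the second with
`n ↦ -n - 1`, which fixes `(n + 1/2)²`, gives twice the sum over odd `2k - 1`.
-/

open Real

section IntFolding

variable {M : Type*} [AddCommMonoid M] [TopologicalSpace M] [ContinuousAdd M] [T2Space M]
  {f : ℤ → M}

theorem tsum_int_eq_two_nsmul_tsum_nat_of_neg_add_one (hf : Summable fun n : ℕ ↦ f n)
    (h : ∀ n : ℕ, f (-(n + 1)) = f n) : ∑' n : ℤ, f n = 2 • ∑' n : ℕ, f n := by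
  have h' : (fun n : ℕ ↦ f (-(n + 1))) = fun n : ℕ ↦ f n := funext h
  rw [tsum_of_nat_of_neg_add_one hf (h' ▸ hf), h', two_nsmul]

theorem tsum_int_eq_zero_add_two_nsmul_tsum_succ (hf : Summable fun n : ℕ ↦ f (n + 1))
    (h : ∀ n : ℕ, f (-(n + 1)) = f (n + 1)) :
    ∑' n : ℤ, f n = f 0 + 2 • ∑' n : ℕ, f (n + 1) := by
  have h' : (fun n : ℕ ↦ f (-(n + 1))) = fun n : ℕ ↦ f (n + 1) := funext h
  rw [tsum_of_add_one_of_neg_add_one hf (h' ▸ hf), h', two_nsmul]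
  abel

end IntFolding

theorem summable_exp_neg_mul_sq_of_ge {c : ℝ} (hc : 0 < c) {f : ℕ → ℝ} (hf : ∀ n, n ≤ f n) :
    Summable fun n ↦ rexp (-c * f n ^ 2) := by
  refine summable_exp_nat_mul_of_ge (neg_lt_zero.2 hc) fun n ↦ ?_
  rcases Nat.eq_zero_or_pos n with rfl | hn
  · simpa using sq_nonneg (f 0)
  · have h1 : (1 : ℝ) ≤ n := by exact_mod_cast hn
    nlinarith [hf n]

theorem tsum_int_neg_one_zpow_mul_exp_neg_mul_sq {c : ℝ} (hc : 0 < c) :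
    ∑' n : ℤ, (-1 : ℝ) ^ n * rexp (-c * n ^ 2) =
      1 - 2 * ∑' k : ℕ, (-1 : ℝ) ^ k * rexp (-c * ((k : ℝ) + 1) ^ 2) := by
  have hsucc : ∀ k : ℕ, (-1 : ℝ) ^ ((k : ℤ) + 1) * rexp (-c * ((k + 1 : ℤ) : ℝ) ^ 2) =
      -((-1 : ℝ) ^ k * rexp (-c * ((k : ℝ) + 1) ^ 2)) := by
    intro k
    rw [zpow_add_one₀ (by norm_num), zpow_natCast]
    push_cast
    ring
  have hsumm : Summable fun k : ℕ ↦ (-1 : ℝ) ^ k * rexp (-c * ((k : ℝ) + 1) ^ 2) := by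
    refine .of_norm_bounded (summable_exp_neg_mul_sq_of_ge hc (f := fun k ↦ (k : ℝ) + 1)
      fun k ↦ by simp) fun k ↦ ?_
    simp
  rw [tsum_int_eq_zero_add_two_nsmul_tsum_succ (hsumm.neg.congr fun k ↦ (hsucc k).symm)
    fun k ↦ ?_, tsum_congr hsucc, tsum_neg]
  · simp [sub_eq_add_neg]
  · rw [Int.cast_neg, neg_sq, zpow_neg, ← inv_zpow, inv_neg_one]

theorem tsum_int_exp_neg_mul_add_half_sq {c : ℝ} (hc : 0 < c) :
    ∑' n : ℤ, rexp (-c * (n + 1 / 2) ^ 2) = 2 * ∑' k : ℕ, rexp (-c * ((k : ℝ) + 1 / 2) ^ 2) := by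
  have hsumm : Summable fun k : ℕ ↦ rexp (-c * ((k : ℝ) + 1 / 2) ^ 2) :=
    summable_exp_neg_mul_sq_of_ge hc fun k ↦ by linarith
  rw [tsum_int_eq_two_nsmul_tsum_nat_of_neg_add_one (f := fun n : ℤ ↦ rexp (-c * (n + 1 / 2) ^ 2))
    (by simpa only [Int.cast_natCast] using hsumm) fun k ↦ ?_, nsmul_eq_mul, Nat.cast_ofNat]
  · simp only [Int.cast_natCast]
  · push_cast
    ring_nf

open Complex in
/-- Mathlib's theta transformation `Complex.tsum_exp_neg_quadratic` at `a = c / π`, `b = -i / 2`: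
the linear term `2πbn` becomes the sign `(-1) ^ n` and the shift `n + ib` becomes `n + 1 / 2`. -/
theorem tsum_neg_one_zpow_mul_exp_neg_mul_int_sq {c : ℝ} (hc : 0 < c) :
    ∑' n : ℤ, (-1 : ℝ) ^ n * rexp (-c * n ^ 2) =
      √(π / c) * ∑' n : ℤ, rexp (-(π ^ 2 / c) * (n + 1 / 2) ^ 2) := by
  have ha : 0 < c / π := div_pos hc pi_pos
  have key := tsum_exp_neg_quadratic (a := (c / π : ℝ)) (by rwa [ofReal_re]) (-I / 2)
  have hl : ∀ n : ℤ, cexp (-π * (c / π : ℝ) * n ^ 2 + 2 * π * (-I / 2) * n) =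
      ((-1 : ℝ) ^ n * rexp (-c * n ^ 2) : ℝ) := by
    intro n
    rw [Complex.exp_add, show 2 * π * (-I / 2) * n = n * -(π * I) by ring, Complex.exp_int_mul,
      Complex.exp_neg, exp_pi_mul_I, inv_neg_one, mul_comm]
    push_cast
    field_simp
  have hr : ∀ n : ℤ, cexp (-π / (c / π : ℝ) * (n + I * (-I / 2)) ^ 2) =
      (rexp (-(π ^ 2 / c) * (n + 1 / 2) ^ 2) : ℝ) := by
    intro n
    rw [show I * (-I / 2) = 1 / 2 by linear_combination (-1 / 2 : ℂ) * I_sq]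
    push_cast
    field_simp
  rw [tsum_congr hl, tsum_congr hr, ← ofReal_tsum, ← ofReal_tsum,
    show (1 / 2 : ℂ) = ((1 / 2 : ℝ) : ℂ) by norm_num, ← ofReal_cpow ha.le] at key
  rw [← inv_div, sqrt_inv, sqrt_eq_rpow, ← one_div]
  exact_mod_cast key

theorem kolmogorov_theta_identity (x : ℝ) (hx : 0 < x) :
    1 - 2 * ∑' k : ℕ, (-1 : ℝ) ^ k * Real.exp (-2 * ((k : ℝ) + 1) ^ 2 * x ^ 2) =
      (Real.sqrt (2 * Real.pi) / x) *
        ∑' k : ℕ, Real.exp (-((2 * ((k : ℝ) + 1) - 1) ^ 2 * Real.pi ^ 2) / (8 * x ^ 2)) := by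
  have hc : 0 < 2 * x ^ 2 := by positivity
  have hlhs : ∀ k : ℕ, -2 * ((k : ℝ) + 1) ^ 2 * x ^ 2 = -(2 * x ^ 2) * ((k : ℝ) + 1) ^ 2 :=
    fun k ↦ by ring
  have hrhs : ∀ k : ℕ, -((2 * ((k : ℝ) + 1) - 1) ^ 2 * π ^ 2) / (8 * x ^ 2) =
      -(π ^ 2 / (2 * x ^ 2)) * ((k : ℝ) + 1 / 2) ^ 2 :=
    fun k ↦ by field_simp; ring
  have hscale : √(π / (2 * x ^ 2)) * 2 = √(2 * π) / x := by
    have hsq : π / (2 * x ^ 2) = (√(2 * π) / (2 * x)) ^ 2 := by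
      rw [div_pow, sq_sqrt (by positivity)]
      field_simp
    rw [hsq, sqrt_sq (by positivity)]
    field_simp
  simp only [hlhs, hrhs]
  rw [← tsum_int_neg_one_zpow_mul_exp_neg_mul_sq hc, tsum_neg_one_zpow_mul_exp_neg_mul_int_sq hc,
    tsum_int_exp_neg_mul_add_half_sq (by positivity), ← mul_assoc, hscale]
end

section
/- Let K(x) = 1 - 2 Σ_{k=1}^∞ (-1)^{k-1} e^{-2k²x²} for x > 0 (and 0 for x ≤ 0) be the Kolmogorov distribution function. Then the mean of the Kolmogorov distribution equals √(π/2)·log 2. -/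
/-!
The Gaussian `e^{-2k²x²}` integrates over `(0, ∞)` to `√(π/2) / (2k)`, so termwise integration
turns the mean into `√(π/2)` times the alternating harmonic series, whose sum is `log 2`. The termwise
integration cannot be justified by Fubini–Tonelli, as `∑ 1/k` diverges; instead, the partial
sums of an alternating series with decreasing nonnegative terms lie between `0` and the first
term, so dominated convergence applies with dominating function `e^{-2x²}`.
-/

open Real MeasureTheory Filter Finset Topology

lemma sum_range_neg_one_pow_mul_mem_Icc {E : Type*} [CommRing E] [LinearOrder E] [IsStrictOrderedRing E]
    {a : ℕ → E} (ha : ∀ k, 0 ≤ a k) (hanti : Antitone a) (n : ℕ) :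
    ∑ i ∈ range n, (-1) ^ i * a i ∈ Set.Icc 0 (a 0) := by
  induction n generalizing a with
  | zero => simpa using ha 0
  | succ n ih =>
    obtain ⟨hlo, hhi⟩ := ih (fun k ↦ ha (k + 1)) (hanti.comp_monotone fun _ _ h ↦ by lia)
    have h10 : a 1 ≤ a 0 := hanti zero_le_one
    simp only [sum_range_succ', pow_succ, mul_neg_one, neg_mul, sum_neg_distrib, pow_zero, zero_add,
      one_mul] at hlo hhi ⊢
    constructor <;> linarith

lemma abs_sum_range_neg_one_pow_mul_le {E : Type*} [CommRing E] [LinearOrder E] [IsStrictOrderedRing E]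
    {a : ℕ → E} (ha : ∀ k, 0 ≤ a k) (hanti : Antitone a) (n : ℕ) :
    |∑ i ∈ range n, (-1) ^ i * a i| ≤ a 0 := by
  obtain ⟨hlo, hhi⟩ := sum_range_neg_one_pow_mul_mem_Icc ha hanti n
  exact abs_le.2 ⟨by linarith [ha 0], hhi⟩

lemma sum_range_two_mul_neg_one_pow_div_succ (n : ℕ) :
    ∑ k ∈ range (2 * n), (-1 : ℝ) ^ k / (k + 1) = harmonic (2 * n) - harmonic n := by
  induction n with
  | zero => simp
  | succ n ih =>
    rw [show 2 * (n + 1) = 2 * n + 1 + 1 by ring, sum_range_succ, sum_range_succ, ih,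
      harmonic_succ, harmonic_succ, harmonic_succ, pow_succ, pow_mul]
    push_cast
    field_simp
    ring

lemma tendsto_sum_range_neg_one_pow_div_succ :
    Tendsto (fun n : ℕ ↦ ∑ k ∈ range n, (-1 : ℝ) ^ k / (k + 1)) atTop (𝓝 (log 2)) := by
  obtain ⟨l, hl⟩ := Antitone.tendsto_alternating_series_of_tendsto_zero
    (f := fun k : ℕ ↦ 1 / ((k : ℝ) + 1))
    (fun _ _ h ↦ by dsimp only; gcongr) tendsto_one_div_add_atTop_nhds_zero_nat
  simp only [mul_one_div] at hl
  have h2n : Tendsto (fun n : ℕ ↦ 2 * n) atTop atTop :=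
    tendsto_id.const_mul_atTop' two_pos
  -- `H(2n) - H(n) = (H(2n) - log(2n)) - (H(n) - log n) + log 2 → γ - γ + log 2`
  have hharm : Tendsto (fun n : ℕ ↦ (harmonic (2 * n) : ℝ) - harmonic n) atTop (𝓝 (log 2)) := by
    have h := ((tendsto_harmonic_sub_log.comp h2n).sub tendsto_harmonic_sub_log).add_const (log 2)
    rw [sub_self, zero_add] at h
    refine h.congr' ?_
    filter_upwards [eventually_ne_atTop 0] with n hn
    simp only [Function.comp_apply, Nat.cast_mul, Nat.cast_ofNat]
    rw [log_mul two_ne_zero (Nat.cast_ne_zero.2 hn)]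
    ring
  have hl2 : l = log 2 := tendsto_nhds_unique (hl.comp h2n) <| by
    simpa only [Function.comp_def, sum_range_two_mul_neg_one_pow_div_succ] using hharm
  exact hl2 ▸ hl

lemma tendsto_sum_range_neg_one_pow_mul_integral {α : Type*} [MeasurableSpace α] {μ : Measure α}
    {f : ℕ → α → ℝ} (hint : ∀ k, Integrable (f k) μ) (hnonneg : ∀ᵐ x ∂μ, ∀ k, 0 ≤ f k x)
    (hanti : ∀ᵐ x ∂μ, Antitone (f · x)) (hsum : ∀ᵐ x ∂μ, Summable (f · x)) :
    Tendsto (fun n ↦ ∑ k ∈ range n, (-1) ^ k * ∫ x, f k x ∂μ) atTop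
      (𝓝 (∫ x, ∑' k, (-1) ^ k * f k x ∂μ)) := by
  have hpartial (n : ℕ) : ∑ k ∈ range n, (-1) ^ k * ∫ x, f k x ∂μ =
      ∫ x, ∑ k ∈ range n, (-1) ^ k * f k x ∂μ := by
    rw [integral_finsetSum _ fun k _ ↦ (hint k).const_mul _]
    simp only [integral_const_mul]
  simp only [hpartial]
  refine tendsto_integral_of_dominated_convergence (f 0)
    (fun n ↦ (integrable_finsetSum _ fun k _ ↦ (hint k).const_mul _).aestronglyMeasurable)
    (hint 0) (fun n ↦ ?_) ?_
  · filter_upwards [hnonneg, hanti] with x hx hx'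
    exact abs_sum_range_neg_one_pow_mul_le hx hx' n
  · filter_upwards [hsum] with x hx using hx.alternating.hasSum.tendsto_sum_nat

lemma integrable_exp_neg_mul_sq_mul_sq {b c : ℝ} (hb : 0 < b) (hc : c ≠ 0) :
    Integrable fun x : ℝ ↦ exp (-b * c ^ 2 * x ^ 2) := by
  simpa only [neg_mul] using integrable_exp_neg_mul_sq (by positivity : 0 < b * c ^ 2)

lemma integral_Ioi_exp_neg_mul_sq_mul_sq (b : ℝ) {c : ℝ} (hc : 0 < c) :
    ∫ x in Set.Ioi 0, exp (-b * c ^ 2 * x ^ 2) = √(π / b) / (2 * c) := by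
  simp_rw [show ∀ x : ℝ, -b * c ^ 2 * x ^ 2 = -(b * c ^ 2) * x ^ 2 from fun x ↦ by ring]
  rw [integral_gaussian_Ioi, ← div_div, sqrt_div' _ (sq_nonneg c), sqrt_sq hc.le, div_div,
    mul_comm c]

lemma antitone_exp_neg_mul_succ_sq_mul_sq {b : ℝ} (hb : 0 ≤ b) (x : ℝ) :
    Antitone fun k : ℕ ↦ exp (-b * ((k : ℝ) + 1) ^ 2 * x ^ 2) := by
  intro k m hkm
  have : b * ((k : ℝ) + 1) ^ 2 * x ^ 2 ≤ b * ((m : ℝ) + 1) ^ 2 * x ^ 2 := by gcongr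
  exact exp_le_exp.2 (by linarith)

lemma summable_exp_neg_mul_succ_sq_mul_sq {b x : ℝ} (hb : 0 < b) (hx : x ≠ 0) :
    Summable fun k : ℕ ↦ exp (-b * ((k : ℝ) + 1) ^ 2 * x ^ 2) := by
  have hi (i : ℕ) : (i : ℝ) ≤ ((i : ℝ) + 1) ^ 2 := by nlinarith
  convert summable_exp_nat_mul_of_ge (neg_neg_of_pos (by positivity : 0 < b * x ^ 2)) hi using 3
  ring

theorem kolmogorov_mean :
    ∫ x in Set.Ioi (0 : ℝ),
        2 * ∑' k : ℕ, (-1 : ℝ) ^ k * Real.exp (-2 * ((k : ℝ) + 1) ^ 2 * x ^ 2) =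
      Real.sqrt (Real.pi / 2) * Real.log 2 := by
  have htermwise := tendsto_sum_range_neg_one_pow_mul_integral
    (μ := volume.restrict (Set.Ioi 0)) (f := fun k x ↦ exp (-2 * ((k : ℝ) + 1) ^ 2 * x ^ 2))
    (fun k ↦ (integrable_exp_neg_mul_sq_mul_sq two_pos (Nat.cast_add_one_ne_zero k)).integrableOn)
    (ae_of_all _ fun x k ↦ (exp_pos _).le)
    (ae_of_all _ (antitone_exp_neg_mul_succ_sq_mul_sq zero_le_two))
    ((ae_restrict_iff' measurableSet_Ioi).2 <| ae_of_all _ fun x hx ↦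
      summable_exp_neg_mul_succ_sq_mul_sq two_pos (ne_of_gt hx))
  have hlog2 : Tendsto (fun n ↦ ∑ k ∈ range n, (-1 : ℝ) ^ k * (√(π / 2) / (2 * (k + 1))))
      atTop (𝓝 (√(π / 2) / 2 * log 2)) := by
    convert tendsto_sum_range_neg_one_pow_div_succ.const_mul (√(π / 2) / 2) using 2 with n
    rw [mul_sum]
    refine sum_congr rfl fun k _ ↦ ?_
    field_simp
  simp only [integral_Ioi_exp_neg_mul_sq_mul_sq _ (Nat.cast_add_one_pos _)] at htermwise
  rw [integral_const_mul, tendsto_nhds_unique htermwise hlog2]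
  ring
end
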